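/- arXiv:math/0102231 — 4 statements merged into one kernel-verified Lean document; each statement's English description precedes it below -/
import Mathlib

section
/- Let A and B be nonempty finite subsets of ℂ with A ∩ B = ∅. Then the sets {z ∈ ℂ | ∃ a ∈ A, ∃ k ∈ ℕ, z = −a − 2k} and {z ∈ ℂ | ∃ b ∈ B, ∃ k ∈ ℕ, z = −b − 2k} are not equal. (These sets are the supports of the polar divisors of the products ∏_{a∈A} Γ_ℝ((s+a)/2) and ∏_{b∈B} Γ_ℝ((s+b)/2), where Γ_ℝ(s) = π^{−s/2}Γ(s/2); this is the Baby Lemma of Section 4: two such products with disjoint shift sets cannot have the same polar divisor.) -/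
/-!
Among the finitely many shifts in `A ∪ B` pick one, `c`, of least real part; say `c ∈ A`.
Then `-c` lies in the support for `A`, so `-c = -b - 2k` with `b ∈ B`; comparing real parts
forces `k = 0` by minimality, hence `c = b ∈ A ∩ B`.
-/

open Finset

/-- The pole set of `s ↦ ∏_{a ∈ S} Γ_ℝ((s + a)/2)`. -/
def gammaPoles (S : Set ℂ) : Set ℂ := {z | ∃ a ∈ S, ∃ k : ℕ, z = -a - 2 * k}

lemma neg_mem_gammaPoles {S : Set ℂ} {a : ℂ} (ha : a ∈ S) : -a ∈ gammaPoles S :=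
  ⟨a, ha, 0, by simp⟩

lemma mem_of_neg_mem_gammaPoles {S : Set ℂ} {c : ℂ} (hc : -c ∈ gammaPoles S)
    (hmin : ∀ b ∈ S, c.re ≤ b.re) : c ∈ S := by
  obtain ⟨b, hb, k, hk⟩ := hc
  have hre : c.re = b.re + 2 * k := by
    have := congrArg Complex.re hk
    simp only [Complex.neg_re, Complex.sub_re, Complex.mul_re, Complex.natCast_re,
      Complex.natCast_im, Complex.re_ofNat, Complex.im_ofNat] at this
    linarith
  have hk0 : k = 0 := by
    have : (k : ℝ) ≤ 0 := by linarith [hmin b hb]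
    exact_mod_cast le_antisymm this k.cast_nonneg
  subst hk0
  have hcb : c = b := by simpa using hk
  exact hcb ▸ hb

lemma mem_of_gammaPoles_eq {S T : Set ℂ} (h : gammaPoles S = gammaPoles T) {c : ℂ}
    (hc : c ∈ S) (hmin : ∀ b ∈ T, c.re ≤ b.re) : c ∈ T :=
  mem_of_neg_mem_gammaPoles (h ▸ neg_mem_gammaPoles hc) hmin

theorem stmt3_general (A B : Finset ℂ) (hA : A.Nonempty)
    (hAB : Disjoint A B) :
    {z : ℂ | ∃ a ∈ A, ∃ k : ℕ, z = -a - 2 * k} ≠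
      {z : ℂ | ∃ b ∈ B, ∃ k : ℕ, z = -b - 2 * k} := by
  intro heq
  change gammaPoles A = gammaPoles B at heq
  obtain ⟨c, hc, hmin⟩ := (A ∪ B).exists_min_image Complex.re (hA.mono subset_union_left)
  rcases mem_union.mp hc with hcA | hcB
  · exact disjoint_left.mp hAB hcA <|
      mem_of_gammaPoles_eq heq hcA fun b hb ↦ hmin b (mem_union_right _ hb)
  · exact disjoint_right.mp hAB hcB <|
      mem_of_gammaPoles_eq heq.symm hcB fun a ha ↦ hmin a (mem_union_left _ ha)

/-- The **Baby Lemma** of Section 4: if `A` and `B` are disjoint nonempty finite sets of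
complex numbers, then the supports `{−a − 2k : a ∈ A, k ∈ ℕ}` and `{−b − 2k : b ∈ B, k ∈ ℕ}`
of the polar divisors of `∏_{a∈A} Γ_ℝ((s+a)/2)` and `∏_{b∈B} Γ_ℝ((s+b)/2)` are distinct. -/
theorem stmt3 (A B : Finset ℂ) (hA : A.Nonempty) (hB : B.Nonempty)
    (hAB : Disjoint A B) :
    {z : ℂ | ∃ a ∈ A, ∃ k : ℕ, z = -a - 2 * k} ≠
      {z : ℂ | ∃ b ∈ B, ∃ k : ℕ, z = -b - 2 * k} :=
  stmt3_general A B hA hAB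
end

section
/- Let G be a group, τ : G → GL(2,ℂ) an irreducible representation, and ν : G → ℂˣ a nontrivial homomorphism such that τ ⊗ ν ≅ τ, i.e., there is P ∈ GL(2,ℂ) with ν(g) • τ(g) = P τ(g) P⁻¹ for all g ∈ G. Then ν² = 1, the kernel H of ν is a subgroup of index 2 in G, and τ is induced from a character of H: there is a one-dimensional subspace L of ℂ² with τ(h)L = L for all h ∈ H and ℂ² = L ⊕ τ(g₀)L for any g₀ ∈ G \ H. (An irreducible 2-dimensional representation admitting a nontrivial self-twist is dihedral, induced from the kernel of the twisting character; this fact is used throughout the paper, e.g. in Lemmas 3.6, 3.14 and 4.21.) -/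
open Matrix
open scoped MatrixGroups

/-- A representation `τ : G → GL(n,ℂ)` is irreducible if the only subspaces of `ℂⁿ`
invariant under all `τ(g)` are `0` and everything. -/
def IsIrrep {n : Type*} [Fintype n] [DecidableEq n] {G : Type*} [Group G]
    (τ : G →* GL n ℂ) : Prop :=
  ∀ W : Submodule ℂ (n → ℂ),
    (∀ g : G, ∀ v ∈ W, (τ g : Matrix n n ℂ).mulVec v ∈ W) → W = ⊥ ∨ W = ⊤

/-- An irreducible 2-dimensional representation admitting a nontrivial self-twist
`τ ⊗ ν ≅ τ` is dihedral: `ν` is quadratic, its kernel `H` has index 2, and `τ` is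
induced from a character of `H` (fact used in Lemmas 3.6, 3.14 and 4.21). -/
theorem stmt6 {G : Type*} [Group G] (τ : G →* GL (Fin 2) ℂ) (hτ : IsIrrep τ)
    (ν : G →* ℂˣ) (hν : ν ≠ 1) (P : GL (Fin 2) ℂ)
    (hP : ∀ g : G, (ν g : ℂ) • (τ g : Matrix (Fin 2) (Fin 2) ℂ)
        = (P : Matrix (Fin 2) (Fin 2) ℂ) * (τ g : Matrix (Fin 2) (Fin 2) ℂ) *
          ((P⁻¹ : GL (Fin 2) ℂ) : Matrix (Fin 2) (Fin 2) ℂ)) :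
    (∀ g : G, (ν g) ^ 2 = 1) ∧ ν.ker.index = 2 ∧
      ∃ L : Submodule ℂ (Fin 2 → ℂ), Module.finrank ℂ L = 1 ∧
        (∀ h ∈ ν.ker,
          Submodule.map ((τ h : Matrix (Fin 2) (Fin 2) ℂ).mulVecLin) L = L) ∧
        (∀ g₀ : G, g₀ ∉ ν.ker →
          IsCompl L (Submodule.map ((τ g₀ : Matrix (Fin 2) (Fin 2) ℂ).mulVecLin) L)) := by
  classical
  set Q : Matrix (Fin 2) (Fin 2) ℂ := (P : Matrix (Fin 2) (Fin 2) ℂ) with hQdef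
  set A : G → Matrix (Fin 2) (Fin 2) ℂ := fun g => (τ g : Matrix (Fin 2) (Fin 2) ℂ)
    with hAdef
  have hPinvP : ((P⁻¹ : GL (Fin 2) ℂ) : Matrix (Fin 2) (Fin 2) ℂ) * Q = 1 := by
    rw [hQdef, ← Units.val_mul, inv_mul_cancel, Units.val_one]
  have hPPinv : Q * ((P⁻¹ : GL (Fin 2) ℂ) : Matrix (Fin 2) (Fin 2) ℂ) = 1 := by
    rw [hQdef, ← Units.val_mul, mul_inv_cancel, Units.val_one]
  have hAinv : ∀ g : G, A g * A g⁻¹ = 1 := by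
    intro g
    show (τ g : Matrix (Fin 2) (Fin 2) ℂ) * (τ g⁻¹ : Matrix (Fin 2) (Fin 2) ℂ) = 1
    rw [← Units.val_mul, ← MonoidHom.map_mul, mul_inv_cancel, _root_.map_one, Units.val_one]
  -- the key commutation relation
  have key : ∀ g : G, (ν g : ℂ) • (A g * Q) = Q * A g := by
    intro g
    have h := congrArg (· * Q) (hP g)
    rw [smul_mul_assoc, mul_assoc (Q * A g), hPinvP, mul_one] at h
    rw [← smul_mul_assoc] at h ⊢
    exact h
  -- determinants are nonzero
  have hdetQ : det Q ≠ 0 := left_ne_zero_of_mul_eq_one (by rw [← det_mul, hPPinv, det_one])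
  have hdetA : ∀ g : G, det (A g) ≠ 0 := fun g =>
    left_ne_zero_of_mul_eq_one (by rw [← det_mul, hAinv, det_one])
  -- ν is quadratic
  have hsq : ∀ g : G, (ν g : ℂ) ^ 2 = 1 := by
    intro g
    have h := congrArg det (key g)
    rw [det_smul, det_mul, det_mul] at h
    simp only [Fintype.card_fin] at h
    have h2 : ((ν g : ℂ) ^ 2 - 1) * (det (A g) * det Q) = 0 := by linear_combination h
    rcases mul_eq_zero.mp h2 with h3 | h3
    · linear_combination h3
    · exact absurd h3 (mul_ne_zero (hdetA g) hdetQ)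
  have goal1 : ∀ g : G, (ν g) ^ 2 = 1 := by
    intro g
    ext
    push_cast
    exact hsq g
  -- ν g = 1 or -1
  have hpm : ∀ g : G, ν g = 1 ∨ (ν g : ℂ) = -1 := by
    intro g
    have h : ((ν g : ℂ) - 1) * ((ν g : ℂ) + 1) = 0 := by linear_combination hsq g
    rcases mul_eq_zero.mp h with h | h
    · left; ext; push_cast; linear_combination h
    · right; linear_combination h
  have hker1 : ∀ h : G, h ∈ ν.ker → (ν h : ℂ) = 1 := by
    intro h hh
    rw [MonoidHom.mem_ker] at hh
    rw [hh, Units.val_one]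
  -- index 2
  obtain ⟨g₁, hg₁⟩ : ∃ g, ν g ≠ 1 := by
    by_contra h
    push_neg at h
    exact hν (by ext g : 2; simpa using congrArg Units.val (h g))
  have hg₁' : (ν g₁ : ℂ) = -1 := (hpm g₁).resolve_left hg₁
  have hrange : (ν.range : Set ℂˣ) = {1, -1} := by
    ext x
    constructor
    · rintro ⟨g, rfl⟩
      rcases hpm g with h | h
      · left; exact h
      · right; ext; simpa using h
    · rintro (rfl | rfl)
      · exact ⟨1, map_one ν⟩
      · exact ⟨g₁, by ext; simpa using hg₁'⟩
  have hone : (1 : ℂˣ) ≠ -1 := by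
    intro h
    have h2 := congrArg Units.val h
    norm_num at h2
  have hindex : ν.ker.index = 2 := by
    rw [Subgroup.index_ker]
    have h2 : Nat.card ν.range = ({1, -1} : Set ℂˣ).ncard := by
      rw [← hrange, ← Nat.card_coe_set_eq]
      rfl
    rw [h2, Set.ncard_pair hone]
  -- eigenvalue of Q
  obtain ⟨μ, hμ⟩ := Module.End.exists_eigenvalue (Q.mulVecLin)
  set L : Submodule ℂ (Fin 2 → ℂ) := Module.End.eigenspace (Q.mulVecLin) μ with hLdef
  have hmemL : ∀ v : Fin 2 → ℂ, v ∈ L ↔ Q.mulVec v = μ • v := by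
    intro v
    rw [hLdef, Module.End.mem_eigenspace_iff, mulVecLin_apply]
  have hμ0 : μ ≠ 0 := by
    rintro rfl
    obtain ⟨v, hv⟩ := hμ.exists_hasEigenvector
    have h1 : Q.mulVec v = 0 := by
      have h2 := hv.apply_eq_smul
      rw [mulVecLin_apply] at h2
      rw [h2, zero_smul]
    have h3 : v = 0 := by
      calc v = (((P⁻¹ : GL (Fin 2) ℂ) : Matrix (Fin 2) (Fin 2) ℂ) * Q).mulVec v := by
              rw [hPinvP, one_mulVec]
        _ = ((P⁻¹ : GL (Fin 2) ℂ) : Matrix (Fin 2) (Fin 2) ℂ).mulVec (Q.mulVec v) := by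
              rw [mulVec_mulVec]
        _ = 0 := by rw [h1, mulVec_zero]
    exact hv.2 h3
  -- finrank bounds
  have hdim : Module.finrank ℂ (Fin 2 → ℂ) = 2 := by simp
  have hLle : Module.finrank ℂ L ≤ 2 := by
    exact le_trans (Submodule.finrank_le L) (le_of_eq hdim)
  have hLne : Module.finrank ℂ L ≠ 0 := by
    intro h
    exact hμ (Submodule.finrank_eq_zero.mp h)
  -- L is not everything (else P scalar and ν trivial)
  have hLne2 : Module.finrank ℂ L ≠ 2 := by
    intro h
    have hLtop : L = ⊤ := Submodule.eq_top_of_finrank_eq (h.trans hdim.symm)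
    apply hν
    ext g : 2
    show (ν g : ℂ) = 1
    -- every vector is an eigenvector of Q
    have hall : ∀ v : Fin 2 → ℂ, Q.mulVec v = μ • v := by
      intro v
      exact (hmemL v).mp (hLtop ▸ Submodule.mem_top)
    set e : Fin 2 → ℂ := Pi.single 0 1 with hedef
    set v₀ : Fin 2 → ℂ := (A g⁻¹).mulVec e with hv₀def
    have hAv₀ : (A g).mulVec v₀ = e := by
      rw [hv₀def, mulVec_mulVec, hAinv, one_mulVec]
    have h1 : ((ν g : ℂ) • (A g * Q)).mulVec v₀ = (Q * A g).mulVec v₀ := by rw [key]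
    rw [smul_mulVec, ← mulVec_mulVec, ← mulVec_mulVec, hall v₀, mulVec_smul,
      hAv₀, hall e] at h1
    have h2 := congrFun h1 0
    simp only [Pi.smul_apply, hedef, Pi.single_eq_same, smul_eq_mul, mul_one] at h2
    have h3 : (ν g : ℂ) * μ = μ := h2
    field_simp at h3
    rw [h3]
  have hL1 : Module.finrank ℂ L = 1 := by omega
  -- invariance of L under τ(h) when ν(h) = 1
  have hinv : ∀ h : G, (ν h : ℂ) = 1 → ∀ v ∈ L, (A h).mulVec v ∈ L := by
    intro h hh v hv
    rw [hmemL] at hv ⊢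
    have h1 : ((ν h : ℂ) • (A h * Q)).mulVec v = (Q * A h).mulVec v := by rw [key]
    rw [hh, one_smul, ← mulVec_mulVec, ← mulVec_mulVec, hv, mulVec_smul] at h1
    exact h1.symm
  have hmap : ∀ h : G, h ∈ ν.ker →
      Submodule.map ((A h).mulVecLin) L = L := by
    intro h hh
    apply le_antisymm
    · rintro w ⟨v, hv, rfl⟩
      rw [mulVecLin_apply]
      exact hinv h (hker1 h hh) v hv
    · intro v hv
      refine ⟨(A h⁻¹).mulVec v, hinv h⁻¹ (hker1 h⁻¹ (inv_mem hh)) v hv, ?_⟩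
      rw [mulVecLin_apply, mulVec_mulVec, hAinv, one_mulVec]
  -- complement
  have hcompl : ∀ g₀ : G, g₀ ∉ ν.ker →
      IsCompl L (Submodule.map ((A g₀).mulVecLin) L) := by
    intro g₀ hg₀
    have hg₀' : (ν g₀ : ℂ) = -1 := by
      refine (hpm g₀).resolve_left ?_
      intro h; exact hg₀ (MonoidHom.mem_ker.mpr h)
    set M := Submodule.map ((A g₀).mulVecLin) L with hMdef
    have hM : ∀ w ∈ M, Q.mulVec w = (-μ) • w := by
      rintro w ⟨v, hv, rfl⟩
      rw [mulVecLin_apply]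
      replace hv : Q.mulVec v = μ • v := (hmemL v).mp hv
      have h1 : ((ν g₀ : ℂ) • (A g₀ * Q)).mulVec v = (Q * A g₀).mulVec v := by rw [key]
      rw [hg₀', smul_mulVec, ← mulVec_mulVec, ← mulVec_mulVec, hv, mulVec_smul] at h1
      rw [← h1, smul_smul]
      norm_num
    have hdisj : Disjoint L M := by
      rw [Submodule.disjoint_def]
      intro w hwL hwM
      have h1 : μ • w = (-μ) • w := by rw [← (hmemL w).mp hwL, ← hM w hwM]
      have h2 : (μ - (-μ)) • w = 0 := by rw [sub_smul, h1, sub_self]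
      rcases smul_eq_zero.mp h2 with h3 | h3
      · exfalso; apply hμ0; linear_combination h3 / 2
      · exact h3
    -- finrank of M
    have hM1 : Module.finrank ℂ M = 1 := by
      let e : (Fin 2 → ℂ) ≃ₗ[ℂ] (Fin 2 → ℂ) :=
        LinearEquiv.ofLinear ((A g₀).mulVecLin) ((A g₀⁻¹).mulVecLin)
          (by rw [← mulVecLin_mul, hAinv, mulVecLin_one])
          (by
            have h6 : A g₀⁻¹ * A g₀ = 1 := by
              have h7 := hAinv g₀⁻¹
              rwa [inv_inv] at h7
            rw [← mulVecLin_mul, h6, mulVecLin_one])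
      have h5 := LinearEquiv.finrank_map_eq e L
      rw [show ((e : (Fin 2 → ℂ) →ₗ[ℂ] (Fin 2 → ℂ))) = (A g₀).mulVecLin from rfl] at h5
      rw [hMdef, h5, hL1]
    refine ⟨hdisj, ?_⟩
    rw [codisjoint_iff]
    apply Submodule.eq_top_of_finrank_eq
    have h4 := Submodule.finrank_sup_add_finrank_inf_eq L M
    rw [disjoint_iff.mp hdisj] at h4
    simp only [finrank_bot] at h4
    rw [hdim]
    omega
  exact ⟨goal1, hindex, L, hL1, hmap, hcompl⟩
end

section
/- Let E ⊆ Ω be a field extension and let K, K' be intermediate fields of Ω/E, each of which is a finite Galois extension of E whose Galois group over E is isomorphic, as an abstract group, to the symmetric group S₄ on four letters. If K ∩ K' ≠ E, then there is an intermediate field F with E ⊊ F ⊆ K ∩ K' and [F : E] = 2. (This is the core of Lemma 8.2: since the quadratic subextension of such an S₄-extension is unique, two S₄-splitting fields over E whose quadratic subextensions differ must be linearly disjoint over E.) -/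
/-!
`K ⊓ K'` is Galois over `E` and nontrivial, so its fixing subgroup is a proper normal subgroup
of `Gal(K/E) ≃ S₄`. A normal subgroup of `S₄` containing an odd permutation `σ` contains a
transposition of the form `σ (g σ g⁻¹) σ`, hence all of `S₄`; so every proper normal subgroup lies
in `A₄`, and `K ⊓ K'` contains the fixed field of `A₄`, which is quadratic over `E`.
-/

open IntermediateField

namespace Equiv.Perm

theorem eq_top_of_isSwap_mem {α : Type*} [DecidableEq α] [Finite α]
    {H : Subgroup (Perm α)} [H.Normal] {σ : Perm α} (hσ : σ.IsSwap) (hσH : σ ∈ H) : H = ⊤ := by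
  obtain ⟨a, b, hab, rfl⟩ := hσ
  rw [eq_top_iff, ← closure_isSwap, Subgroup.closure_le]
  rintro _ ⟨c, d, hcd, rfl⟩
  obtain ⟨g, hg⟩ := isConj_iff.mp (isConj_swap hab hcd)
  rw [← hg]
  exact Subgroup.Normal.conj_mem inferInstance _ hσH g

set_option maxRecDepth 2000 in
theorem exists_mul_conj_mul_eq_swap_fin_four :
    ∀ σ : Perm (Fin 4), sign σ = -1 →
      ∃ g : Perm (Fin 4), ∃ a b, a ≠ b ∧ σ * (g * σ * g⁻¹) * σ = swap a b := by
  decide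

theorem normal_le_alternatingGroup_fin_four {H : Subgroup (Perm (Fin 4))} [H.Normal]
    (hH : H ≠ ⊤) : H ≤ alternatingGroup (Fin 4) := by
  intro σ hσH
  rw [mem_alternatingGroup]
  by_contra hσ
  obtain ⟨g, a, b, hab, hswap⟩ :=
    exists_mul_conj_mul_eq_swap_fin_four σ ((Int.units_eq_one_or _).resolve_left hσ)
  exact hH <| eq_top_of_isSwap_mem ⟨a, b, hab, hswap⟩ <| hswap ▸
    H.mul_mem (H.mul_mem hσH (Subgroup.Normal.conj_mem inferInstance σ hσH g)) hσH

end Equiv.Perm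

theorem normal_le_comap_alternatingGroup_fin_four {G : Type*} [Group G]
    (e : G ≃* Equiv.Perm (Fin 4)) {H : Subgroup G} [H.Normal] (hH : H ≠ ⊤) :
    H ≤ (alternatingGroup (Fin 4)).comap e.toMonoidHom := by
  have hH' : H.comap e.symm.toMonoidHom ≠ ⊤ := by
    refine fun h ↦ hH (eq_top_iff.mpr fun x _ ↦ ?_)
    simpa using (h ▸ Subgroup.mem_top (e x) : e x ∈ H.comap e.symm.toMonoidHom)
  exact fun x hx ↦ Equiv.Perm.normal_le_alternatingGroup_fin_four hH' (by simpa using hx)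

namespace IsGalois

variable {E K : Type*} [Field E] [Field K] [Algebra E K] [FiniteDimensional E K] [IsGalois E K]

theorem fixedField_le_of_forall_normal_le {N : Subgroup (K ≃ₐ[E] K)}
    (hN : ∀ H : Subgroup (K ≃ₐ[E] K), H.Normal → H ≠ ⊤ → H ≤ N)
    (L : IntermediateField E K) [IsGalois E L] (hL : L ≠ ⊥) : fixedField N ≤ L := by
  have hLfix : L.fixingSubgroup ≠ ⊤ := by
    refine fun h ↦ hL ?_
    rw [← fixedField_fixingSubgroup L, h, fixedField_top]
  rw [← fixedField_fixingSubgroup L]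
  exact fixedField_antitone (hN _ inferInstance hLfix)

theorem finrank_fixedField (N : Subgroup (K ≃ₐ[E] K)) :
    Module.finrank E (fixedField N) = N.index := by
  rw [finrank_eq_fixingSubgroup_index, fixingSubgroup_fixedField]

end IsGalois

theorem stmt12_general {E Ω : Type*} [Field E] [Field Ω] [Algebra E Ω]
    (K K' : IntermediateField E Ω)
    [FiniteDimensional E K] [IsGalois E K]
    [IsGalois E K']
    (hK : Nonempty ((K ≃ₐ[E] K) ≃* Equiv.Perm (Fin 4)))
    (hne : K ⊓ K' ≠ ⊥) :
    ∃ F : IntermediateField E Ω, ⊥ < F ∧ F ≤ K ⊓ K' ∧ Module.finrank E F = 2 := by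
  obtain ⟨e⟩ := hK
  let N := (alternatingGroup (Fin 4)).comap e.toMonoidHom
  have hN : N.index = 2 := by
    rw [Subgroup.index_comap_of_surjective _ e.surjective, alternatingGroup.index_eq_two]
  have hle : K ⊓ K' ≤ K := inf_le_left
  let L := restrict hle
  have : IsGalois E L := .of_algEquiv (restrictAlgEquiv _)
  have hL : L ≠ ⊥ := by rwa [ne_eq, ← lift_inj, lift_restrict, lift_bot]
  have hNL : fixedField N ≤ L := IsGalois.fixedField_le_of_forall_normal_le
    (fun _ _ ↦ normal_le_comap_alternatingGroup_fin_four e) L hL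
  have hrank : Module.finrank E (lift (fixedField N)) = 2 := by
    rw [← (liftAlgEquiv _).toLinearEquiv.finrank_eq, IsGalois.finrank_fixedField, hN]
  refine ⟨lift (fixedField N), ?_, lift_restrict hle ▸ map_mono _ hNL, hrank⟩
  rw [bot_lt_iff_ne_bot, ne_eq, ← IntermediateField.finrank_eq_one_iff, hrank]
  decide

/-- Core of **Lemma 8.2**: if `K` and `K'` are intermediate fields of `Ω/E`, each finite
Galois over `E` with Galois group isomorphic to `S₄`, and `K ∩ K' ≠ E`, then `K ∩ K'`
contains a quadratic extension of `E`. -/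
theorem stmt12 {E Ω : Type*} [Field E] [Field Ω] [Algebra E Ω]
    (K K' : IntermediateField E Ω)
    [FiniteDimensional E K] [IsGalois E K]
    [FiniteDimensional E K'] [IsGalois E K']
    (hK : Nonempty ((K ≃ₐ[E] K) ≃* Equiv.Perm (Fin 4)))
    (hK' : Nonempty ((K' ≃ₐ[E] K') ≃* Equiv.Perm (Fin 4)))
    (hne : K ⊓ K' ≠ ⊥) :
    ∃ F : IntermediateField E Ω, ⊥ < F ∧ F ≤ K ⊓ K' ∧ Module.finrank E F = 2 :=
  stmt12_general K K' hK hne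
end

section
/- Let Γ be a subgroup of S₄ × S₄ (the direct product of two copies of the group of permutations of a four-element set) such that both coordinate projections Γ → S₄ are surjective and Γ ≠ S₄ × S₄. Then sign(x) = sign(y) for every (x, y) ∈ Γ, where sign is the sign character of S₄. (This is the group-theoretic content of the linear-disjointness argument in Lemma 8.2: a proper fiber product of two copies of S₄ over a common quotient identifies the two sign characters, since every proper normal subgroup of S₄ lies in A₄ and every automorphism of a quotient of S₄ preserves the induced sign character.) -/
/-! Since the second projection of `Γ` is onto, `N = {y | (1, y) ∈ Γ}` is normal in `S₄`. If it
contained an odd permutation it would be all of `S₄`, and then `Γ = S₄ × S₄`. So `sign ∘ snd` is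
trivial on the kernel of the first projection of `Γ` and factors through it as a character `f` of
`S₄`; `f` is surjective because `sign ∘ snd` is, and the only surjective character of `S₄` is
`sign`. -/

open Equiv Equiv.Perm

namespace Subgroup

variable {G H : Type*} [Group G] [Group H]

theorem normal_comap_inr_of_forall_exists_mem (Γ : Subgroup (G × H))
    (h2 : ∀ y : H, ∃ x : G, (x, y) ∈ Γ) : (Γ.comap (MonoidHom.inr G H)).Normal where
  conj_mem n hn y := by
    obtain ⟨x, hx⟩ := h2 y
    simpa using Γ.mul_mem (Γ.mul_mem hx hn) (Γ.inv_mem hx)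

theorem eq_top_of_comap_inr_eq_top (Γ : Subgroup (G × H))
    (h1 : ∀ x : G, ∃ y : H, (x, y) ∈ Γ) (h : Γ.comap (MonoidHom.inr G H) = ⊤) : Γ = ⊤ := by
  rw [eq_top_iff]
  rintro ⟨x, y⟩ -
  obtain ⟨y₀, hy₀⟩ := h1 x
  have hy : ((1 : G), y * y₀⁻¹) ∈ Γ := (h ▸ mem_top _ : y * y₀⁻¹ ∈ Γ.comap (MonoidHom.inr G H))
  simpa using Γ.mul_mem hy hy₀

theorem exists_monoidHom_apply_fst_eq_apply_snd {M : Type*} [Group M] (Γ : Subgroup (G × H))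
    (h1 : ∀ x : G, ∃ y : H, (x, y) ∈ Γ) (χ : H →* M)
    (hχ : Γ.comap (MonoidHom.inr G H) ≤ χ.ker) :
    ∃ f : G →* M, ∀ g ∈ Γ, f g.1 = χ g.2 := by
  let p : Γ →* G := (MonoidHom.fst G H).comp Γ.subtype
  let q : Γ →* M := χ.comp ((MonoidHom.snd G H).comp Γ.subtype)
  have hp : Function.Surjective p := fun x => by
    obtain ⟨y, hy⟩ := h1 x
    exact ⟨⟨(x, y), hy⟩, rfl⟩
  have hpq : p.ker ≤ q.ker := by
    rintro ⟨⟨x, y⟩, hg⟩ (rfl : x = 1)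
    exact hχ hg
  exact ⟨p.liftOfSurjective hp ⟨q, hpq⟩, fun g hg =>
    p.liftOfRightInverse_comp_apply _ _ ⟨q, hpq⟩ ⟨g, hg⟩⟩

end Subgroup

theorem Subgroup.Normal.eq_top_of_swap_mem {α : Type*} [DecidableEq α] [Finite α]
    {N : Subgroup (Perm α)} (hN : N.Normal) {x y : α} (hxy : x ≠ y) (h : swap x y ∈ N) :
    N = ⊤ := by
  rw [eq_top_iff, ← closure_isSwap, Subgroup.closure_le]
  rintro _ ⟨a, b, hab, rfl⟩
  obtain ⟨c, hc⟩ := isConj_iff.1 (isConj_swap hxy hab)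
  exact hc ▸ hN.conj_mem _ h c

/- An odd `τ ∈ S₄` is a transposition or a 4-cycle; in the latter case `τ²` is a double
transposition, and `τ` times a suitable conjugate of it is a transposition. -/
set_option maxRecDepth 10000 in
theorem Equiv.Perm.exists_mul_conj_sq_eq_swap_of_sign_eq_neg_one :
    ∀ τ : Perm (Fin 4), sign τ = -1 →
      ∃ σ : Perm (Fin 4), ∃ i j : Fin 4, i ≠ j ∧ τ * (σ * τ ^ 2 * σ⁻¹) = swap i j := by
  decide

theorem Subgroup.Normal.le_alternatingGroup_fin_four {N : Subgroup (Perm (Fin 4))}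
    (hN : N.Normal) (hN_ne : N ≠ ⊤) : N ≤ alternatingGroup (Fin 4) := by
  intro τ hτ
  rw [mem_alternatingGroup]
  by_contra h_odd
  obtain ⟨σ, i, j, hij, hswap⟩ :=
    exists_mul_conj_sq_eq_swap_of_sign_eq_neg_one τ ((Int.units_eq_one_or _).resolve_left h_odd)
  exact hN_ne <| hN.eq_top_of_swap_mem hij <|
    hswap ▸ N.mul_mem hτ (hN.conj_mem _ (N.pow_mem hτ 2) σ)

/-- Group-theoretic content of Lemma 8.2: a proper subgroup of `S₄ × S₄` surjecting onto
both factors identifies the two sign characters. -/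
theorem stmt13 (Γ : Subgroup (Equiv.Perm (Fin 4) × Equiv.Perm (Fin 4)))
    (h1 : ∀ x : Equiv.Perm (Fin 4), ∃ y : Equiv.Perm (Fin 4), (x, y) ∈ Γ)
    (h2 : ∀ y : Equiv.Perm (Fin 4), ∃ x : Equiv.Perm (Fin 4), (x, y) ∈ Γ)
    (hne : Γ ≠ ⊤) :
    ∀ g ∈ Γ, Equiv.Perm.sign g.1 = Equiv.Perm.sign g.2 := by
  have h_even : Γ.comap (MonoidHom.inr _ _) ≤ sign.ker :=
    alternatingGroup_eq_sign_ker (α := Fin 4) ▸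
      (Γ.normal_comap_inr_of_forall_exists_mem h2).le_alternatingGroup_fin_four
        fun h => hne (Γ.eq_top_of_comap_inr_eq_top h1 h)
  obtain ⟨f, hf⟩ := Γ.exists_monoidHom_apply_fst_eq_apply_snd h1 sign h_even
  have hf_sign : f = sign := eq_sign_of_surjective_hom fun u => by
    obtain ⟨y, rfl⟩ := sign_surjective (Fin 4) u
    obtain ⟨x, hx⟩ := h2 y
    exact ⟨x, hf _ hx⟩
  intro g hg
  rw [← hf g hg, hf_sign]
end
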